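/- Let Λ and M be symmetric N×N real matrices and n ≥ 1. If the matrices nΛ + 2M and M are positive semidefinite, then for any collection of symmetric n×n real matrices D₁,…,D_N, the quantity Σᵢ Σⱼ (λᵢⱼ (tr Dⱼ)(tr Dᵢ) + 2 μᵢⱼ (Dⱼ : Dᵢ)) is nonnegative, where A : B = Σₖₗ AₖₗBₖₗ is the Frobenius inner product. -/

import Mathlib

/-!
Split each `Dᵢ` into its deviator `Eᵢ = Dᵢ - (tr Dᵢ / n) I` and its spherical part. The Frobenius
products decouple, `Dⱼ : Dᵢ = Eⱼ : Eᵢ + tr Dᵢ tr Dⱼ / n`, so the dissipation becomes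
`(1/n) tᵀ (nΛ + 2M) t + 2 ∑ₖₗ eₖₗᵀ M eₖₗ` with `t = (tr Dᵢ)ᵢ` and `eₖₗ = ((Eᵢ)ₖₗ)ᵢ`: a sum of
quadratic forms of the two positive semidefinite matrices.
-/

open Finset

namespace Matrix

variable {ι m m' : Type*} [Fintype ι] [Fintype m] [Fintype m']

theorem PosSemidef.sum_mul_mul_nonneg {A : Matrix ι ι ℝ} (hA : A.PosSemidef) (x : ι → ℝ) :
    0 ≤ ∑ i, ∑ j, A i j * x j * x i := by
  simpa [dotProduct, mulVec, mul_sum, mul_comm, mul_left_comm] using hA.dotProduct_mulVec_nonneg x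

theorem PosSemidef.sum_mul_sum_sum_mul_nonneg {A : Matrix ι ι ℝ} (hA : A.PosSemidef)
    (E : ι → Matrix m m' ℝ) :
    0 ≤ ∑ i, ∑ j, A i j * ∑ k, ∑ l, E j k l * E i k l := by
  have hswap : ∑ i, ∑ j, A i j * ∑ k, ∑ l, E j k l * E i k l
      = ∑ k, ∑ l, ∑ i, ∑ j, A i j * E j k l * E i k l := by
    simp only [mul_sum, ← mul_assoc]
    simp_rw [sum_comm (γ := ι) (α := m), sum_comm (γ := ι) (α := m')]
  rw [hswap]
  exact sum_nonneg fun k _ => sum_nonneg fun l _ => hA.sum_mul_mul_nonneg fun i => E i k l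

theorem sum_sum_mul_eq_trace_transpose_mul (A B : Matrix m m' ℝ) :
    ∑ k, ∑ l, A k l * B k l = trace (Aᵀ * B) := by
  simp only [trace, diag_apply, mul_apply, transpose_apply]
  exact sum_comm

noncomputable def deviator [DecidableEq m] (A : Matrix m m ℝ) : Matrix m m ℝ :=
  A - (A.trace / Fintype.card m) • 1

theorem sum_sum_mul_eq_sum_sum_deviator_mul_add [DecidableEq m] (A B : Matrix m m ℝ) :
    ∑ k, ∑ l, A k l * B k l
      = ∑ k, ∑ l, A.deviator k l * B.deviator k l + A.trace * B.trace / Fintype.card m := by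
  rcases isEmpty_or_nonempty m with hm | hm
  · simp
  simp only [sum_sum_mul_eq_trace_transpose_mul, deviator, transpose_sub, transpose_smul,
    transpose_one, sub_mul, mul_sub, Matrix.smul_mul, Matrix.mul_smul, one_mul, mul_one, smul_smul,
    trace_sub, trace_smul, trace_one, trace_transpose, smul_eq_mul]
  field_simp
  ring

end Matrix

theorem stmt0_general (N n : ℕ) (hn : 1 ≤ n)
    (Λ M : Matrix (Fin N) (Fin N) ℝ)
    (h1 : ((n : ℝ) • Λ + 2 • M).PosSemidef) (h2 : M.PosSemidef)
    (D : Fin N → Matrix (Fin n) (Fin n) ℝ) :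
    0 ≤ ∑ i, ∑ j, (Λ i j * (D j).trace * (D i).trace
      + 2 * M i j * ∑ k, ∑ l, D j k l * D i k l) := by
  have hn₀ : (n : ℝ) ≠ 0 := Nat.cast_ne_zero.mpr (by omega)
  have hsplit : ∀ i j, Λ i j * (D j).trace * (D i).trace + 2 * M i j * ∑ k, ∑ l, D j k l * D i k l
      = (n : ℝ)⁻¹ * (((n : ℝ) • Λ + 2 • M) i j * (D j).trace * (D i).trace)
        + 2 * (M i j * ∑ k, ∑ l, (D j).deviator k l * (D i).deviator k l) := by
    intro i j
    rw [Matrix.sum_sum_mul_eq_sum_sum_deviator_mul_add, Fintype.card_fin]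
    simp only [Matrix.add_apply, Matrix.smul_apply]
    simp only [smul_eq_mul, nsmul_eq_mul, Nat.cast_ofNat]
    field_simp
    ring
  simp only [hsplit, sum_add_distrib, ← mul_sum]
  have hspherical := h1.sum_mul_mul_nonneg fun i => (D i).trace
  have hdeviatoric := h2.sum_mul_sum_sum_mul_nonneg fun i => (D i).deviator
  positivity

/-- Dissipation inequality (Second law of thermodynamics) for the multi-fluid
viscous stress: if nΛ+2M and M are positive semidefinite symmetric viscosity
matrices, then Σᵢ Sᵢ : D(uᵢ) ≥ 0. -/
theorem stmt0 (N n : ℕ) (hn : 1 ≤ n)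
    (Λ M : Matrix (Fin N) (Fin N) ℝ)
    (hΛsymm : Λ.IsSymm) (hMsymm : M.IsSymm)
    (h1 : ((n : ℝ) • Λ + 2 • M).PosSemidef) (h2 : M.PosSemidef)
    (D : Fin N → Matrix (Fin n) (Fin n) ℝ)
    (hD : ∀ i, (D i).IsSymm) :
    0 ≤ ∑ i, ∑ j, (Λ i j * (D j).trace * (D i).trace
      + 2 * M i j * ∑ k, ∑ l, D j k l * D i k l) :=
  stmt0_general N n hn Λ M h1 h2 D
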